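/- For every natural number N ≥ 1, the polynomial G_N(x) = I_{N+1}(1)·U_{N−1}(x) + I_N(1)·U_{N−2}(x) − I_N(1) + I_N(1)·T_N(x) satisfies (−1)^N · G_N(x) > 0 for all real x < −1. -/

import Mathlib

open Real Polynomial Polynomial.Chebyshev Finset

noncomputable def besselI (v x : ℝ) : ℝ :=
  ∑' m : ℕ, (1 / (m.factorial * Real.Gamma ((m : ℝ) + v + 1))) * (x / 2) ^ (2 * (m : ℝ) + v)

/-!
With `a = I_{N+1}(1)` and `b = I_N(1)`, the identities `T_N = U_N - x U_{N-1}` and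
`U_N + U_{N-2} = 2x U_{N-1}` collapse the polynomial to `G_N(x) = (a + b x) U_{N-1}(x) - b`.
For `x ≤ -1` the number `(-1)^(N-1) U_{N-1}(x)` is at least `N`, and `-(a + b x) > b - a ≥ b / 2`
because each term of the series of `I_{N+1}(1)` is at most half the matching term of `I_N(1)`.
So `(-1)^N G_N(x) > N (b - a) - b ≥ 0` for `N ≥ 2`, while `(-1)^1 G_1(x) = b - a - b x > 0`.
-/

open scoped Nat

section Chebyshev

theorem U_sub_two_add_T (R : Type*) [CommRing R] (n : ℤ) :
    U R (n - 2) + T R n = X * U R (n - 1) := by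
  rw [U_sub_two, T_eq_U_sub_X_mul_U]
  ring

variable {R : Type*} [CommRing R] [LinearOrder R] [IsStrictOrderedRing R]

theorem natCast_add_one_le_U_eval {y : R} (hy : 1 ≤ y) (n : ℕ) :
    (n : R) + 1 ≤ (U R n).eval y := by
  suffices h : ∀ n : ℕ, (n : R) + 1 ≤ (U R n).eval y ∧
      (U R n).eval y + 1 ≤ (U R (n + 1)).eval y from (h n).1
  intro n
  induction n with
  | zero => norm_num [U_one]; linarith
  | succ n ih =>
    obtain ⟨hlow, hstep⟩ := ih
    have hrec : (U R ((n + 1 : ℕ) + 1)).eval y =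
        2 * y * (U R (n + 1 : ℕ)).eval y - (U R n).eval y := by
      push_cast
      rw [add_assoc, one_add_one_eq_two, U_add_two]
      simp
    push_cast at hrec ⊢
    -- `U_{n+2} - U_{n+1} = 2 (y - 1) U_{n+1} + (U_{n+1} - U_n)` with both summands controlled
    have hgrowth : 0 ≤ 2 * (y - 1) * (U R (n + 1)).eval y := by
      have : (0 : R) ≤ n := n.cast_nonneg
      exact mul_nonneg (by linarith) (by linarith)
    constructor <;> linarith

end Chebyshev

section Bessel

noncomputable def besselITerm (n : ℕ) (x : ℝ) (m : ℕ) : ℝ :=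
  (x / 2) ^ (2 * m + n) / (m ! * (m + n)!)

theorem besselI_natCast (n : ℕ) (x : ℝ) : besselI n x = ∑' m, besselITerm n x m := by
  refine tsum_congr fun m => ?_
  have hGamma : Gamma ((m : ℝ) + n + 1) = (m + n)! := by
    exact_mod_cast Gamma_nat_eq_factorial (m + n)
  have hexp : 2 * (m : ℝ) + n = ((2 * m + n : ℕ) : ℝ) := by push_cast; ring
  rw [besselITerm, hGamma, hexp, rpow_natCast, one_div_mul_eq_div]

variable {x : ℝ}

theorem besselITerm_nonneg (n m : ℕ) (hx : 0 ≤ x) : 0 ≤ besselITerm n x m := by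
  unfold besselITerm; positivity

theorem summable_besselITerm (n : ℕ) (hx : 0 ≤ x) : Summable (besselITerm n x) := by
  refine .of_nonneg_of_le (fun m => besselITerm_nonneg n m hx) (fun m => ?_)
    ((summable_pow_div_factorial ((x / 2) ^ 2)).mul_left ((x / 2) ^ n))
  rw [besselITerm, ← pow_mul, mul_div_assoc', ← pow_add, add_comm n]
  gcongr
  exact le_mul_of_one_le_right (by positivity) (by exact_mod_cast (m + n).factorial_pos)

theorem besselI_natCast_pos (n : ℕ) (hx : 0 < x) : 0 < besselI n x := by
  rw [besselI_natCast]
  exact (summable_besselITerm n hx.le).tsum_pos (fun m => besselITerm_nonneg n m hx.le) 0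
    (by unfold besselITerm; positivity)

theorem besselITerm_succ (n m : ℕ) :
    besselITerm (n + 1) x m = x / (2 * (m + n + 1)) * besselITerm n x m := by
  unfold besselITerm
  rw [← add_assoc, pow_succ, ← add_assoc m, Nat.factorial_succ]
  push_cast
  field_simp

theorem besselI_succ_le (n : ℕ) (hx : 0 ≤ x) :
    besselI ((n : ℝ) + 1) x ≤ x / (2 * (n + 1)) * besselI n x := by
  rw [← Nat.cast_succ, besselI_natCast, besselI_natCast, ← tsum_mul_left]
  refine (summable_besselITerm (n + 1) hx).tsum_le_tsum (fun m => ?_)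
    ((summable_besselITerm n hx).mul_left _)
  rw [besselITerm_succ]
  gcongr
  · exact besselITerm_nonneg n m hx
  · push_cast
    linarith [(m.cast_nonneg : (0 : ℝ) ≤ m)]

theorem two_mul_besselI_succ_one_le (n : ℕ) : 2 * besselI ((n : ℝ) + 1) 1 ≤ besselI n 1 := by
  have hb : 0 < besselI n 1 := besselI_natCast_pos n one_pos
  have hn : 1 / (2 * ((n : ℝ) + 1)) ≤ 1 / 2 := by gcongr; linarith [(n.cast_nonneg : (0 : ℝ) ≤ n)]
  nlinarith [besselI_succ_le n zero_le_one]

end Bessel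

theorem neg_one_pow_mul_U_eval_ge {x : ℝ} (hx : x ≤ -1) (n : ℕ) :
    (n : ℝ) + 1 ≤ (-1) ^ n * (U ℝ n).eval x := by
  simpa [Int.cast_negOnePow_natCast] using natCast_add_one_le_U_eval (y := -x) (by linarith) n

theorem G_sign (N : ℕ) (hN : 1 ≤ N) (x : ℝ) (hx : x < -1) :
    0 < (-1 : ℝ) ^ N *
      (besselI ((N : ℝ) + 1) 1 * (Polynomial.Chebyshev.U ℝ ((N : ℤ) - 1)).eval x +
        besselI (N : ℝ) 1 * (Polynomial.Chebyshev.U ℝ ((N : ℤ) - 2)).eval x -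
        besselI (N : ℝ) 1 + besselI (N : ℝ) 1 * (Polynomial.Chebyshev.T ℝ N).eval x) := by
  set a := besselI ((N : ℝ) + 1) 1
  set b := besselI (N : ℝ) 1
  have hb : 0 < b := besselI_natCast_pos N one_pos
  have hab : 2 * a ≤ b := two_mul_besselI_succ_one_le N
  have hG := congrArg (eval x) (U_sub_two_add_T ℝ N)
  simp only [eval_add, eval_mul, eval_X] at hG
  obtain ⟨n, rfl⟩ := Nat.exists_eq_add_of_le' hN
  push_cast at hG ⊢
  rw [add_sub_cancel_right] at hG ⊢
  set u := (U ℝ n).eval x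
  have hsign : (-1 : ℝ) ^ (n + 1) * (a * u + b * (U ℝ (n + 1 - 2)).eval x - b +
      b * (T ℝ (n + 1)).eval x) = (b * -x - a) * ((-1) ^ n * u) + (-1) ^ n * b := by
    rw [pow_succ]
    linear_combination (-(-1) ^ n * b) * hG
  rw [hsign]
  have hc : b / 2 < b * -x - a := by nlinarith
  have hU : (n : ℝ) + 1 ≤ (-1) ^ n * u := neg_one_pow_mul_U_eval_ge hx.le n
  generalize (-1) ^ n * u = v at hU ⊢
  rcases n with _ | k
  · rw [pow_zero]
    nlinarith
  · have hk : (0 : ℝ) ≤ k := k.cast_nonneg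
    have hsgn : -1 ≤ (-1 : ℝ) ^ (k + 1) := by simpa using neg_abs_le ((-1 : ℝ) ^ (k + 1))
    push_cast at hU
    nlinarith
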